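/- Let G be a finite semigroup and let 𝒮 and 𝒯 be Schur rings over G. Then there exists a Schur ring 𝒰 over G such that the ℚ-linear span of { [C] : C ∈ 𝒰 } equals the intersection of the ℚ-linear spans of { [X] : X ∈ 𝒮 } and { [Y] : Y ∈ 𝒯 } as ℚ-submodules of MonoidAlgebra ℚ G. Moreover, there is a unique coarsest Schur ring over G: a Schur ring 𝒰₀ over G such that every Schur ring 𝒮 over G refines 𝒰₀, i.e., every block of 𝒮 is contained in some block of 𝒰₀. -/

import Mathlib

open scoped Pointwise

/-- The simple quantity `[X] = ∑_{x ∈ X} x` in the semigroup algebra `MonoidAlgebra ℚ G`. -/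
noncomputable def simpleQty {G : Type*} [Mul G] (X : Finset G) : MonoidAlgebra ℚ G :=
  ∑ x ∈ X, MonoidAlgebra.single x (1 : ℚ)

/-- A partition of `G` into nonempty finite blocks. -/
def IsPartition {G : Type*} (S : Set (Set G)) : Prop :=
  (∀ X ∈ S, X.Nonempty ∧ X.Finite) ∧ ∀ x : G, ∃! X, X ∈ S ∧ x ∈ X

/-- The ℚ-linear span of the simple quantities of the blocks of `S`. -/
noncomputable def schurSpan {G : Type*} [Mul G] (S : Set (Set G)) :
    Submodule ℚ (MonoidAlgebra ℚ G) :=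
  Submodule.span ℚ { z | ∃ X ∈ S, ∃ hX : X.Finite, z = simpleQty hX.toFinset }

/-- A Schur ring over the semigroup `G`. -/
def IsSchurRing {G : Type*} [Semigroup G] (S : Set (Set G)) : Prop :=
  IsPartition S ∧ ∀ X ∈ S, ∀ Y ∈ S, ∀ (hX : X.Finite) (hY : Y.Finite),
    simpleQty hX.toFinset * simpleQty hY.toFinset ∈ schurSpan S

/-- `A` is an `S`-subset: a union of blocks of `S`. -/
def IsSUnion {G : Type*} (S : Set (Set G)) (A : Set G) : Prop :=
  ∀ X ∈ S, X ⊆ A ∨ X ∩ A = ∅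

section Aux

variable {G : Type*}

open Classical in
lemma simpleQty_apply [Mul G] (X : Finset G) (g : G) :
    (simpleQty X).coeff g = if g ∈ X then (1 : ℚ) else 0 := by
  unfold simpleQty
  rw [MonoidAlgebra.coeff_sum, Finsupp.finset_sum_apply]
  simp only [MonoidAlgebra.coeff_single, Finsupp.single_apply]
  rw [Finset.sum_ite_eq' X g (fun _ => (1 : ℚ))]

open Classical in
lemma simpleQty_finite_apply [Mul G] {A : Set G} (hA : A.Finite) (g : G) :
    (simpleQty hA.toFinset).coeff g = if g ∈ A then (1 : ℚ) else 0 := by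
  rw [simpleQty_apply]
  by_cases h : g ∈ A
  · rw [if_pos h, if_pos (hA.mem_toFinset.2 h)]
  · rw [if_neg h, if_neg (fun hh => h (hA.mem_toFinset.1 hh))]

/-- Membership in the span of a partition is exactly constancy on the blocks. -/
lemma mem_schurSpan_iff [Mul G] [Fintype G] {S : Set (Set G)} (hS : IsPartition S)
    (f : MonoidAlgebra ℚ G) :
    f ∈ schurSpan S ↔ ∀ X ∈ S, ∀ x ∈ X, ∀ y ∈ X, f.coeff x = f.coeff y := by
  classical
  constructor
  · intro hf
    induction hf using Submodule.span_induction with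
    | mem z hz =>
      obtain ⟨X', hX', hfin, rfl⟩ := hz
      intro X hX x hx y hy
      rw [simpleQty_finite_apply, simpleQty_finite_apply]
      by_cases h : x ∈ X'
      · have : X = X' := (hS.2 x).unique ⟨hX, hx⟩ ⟨hX', h⟩
        rw [if_pos h, if_pos (this ▸ hy)]
      · have hy' : y ∉ X' := by
          intro hy'
          have : X = X' := (hS.2 y).unique ⟨hX, hy⟩ ⟨hX', hy'⟩
          exact h (this ▸ hx)
        rw [if_neg h, if_neg hy']
    | zero => intro X hX x hx y hy; rfl
    | add a b ha hb iha ihb =>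
      intro X hX x hx y hy
      show a.coeff x + b.coeff x = a.coeff y + b.coeff y
      rw [iha X hX x hx y hy, ihb X hX x hx y hy]
    | smul c a ha iha =>
      intro X hX x hx y hy
      show c • a.coeff x = c • a.coeff y
      rw [iha X hX x hx y hy]
  · intro hf
    have hSfin : S.Finite := Set.toFinite S
    set c : Set G → ℚ := fun X => if h : X.Nonempty then f.coeff h.some else 0 with hc
    have key : f = ∑ X ∈ hSfin.toFinset, c X • simpleQty (Set.toFinite X).toFinset := by
      ext g
      rw [MonoidAlgebra.coeff_sum, Finsupp.finset_sum_apply]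
      obtain ⟨B, ⟨hBS, hgB⟩, hBuniq⟩ := hS.2 g
      rw [Finset.sum_eq_single_of_mem B (by simpa using hBS)]
      · have hBne : B.Nonempty := ⟨g, hgB⟩
        show f.coeff g = c B • (simpleQty (Set.toFinite B).toFinset).coeff g
        rw [simpleQty_finite_apply, if_pos hgB, hc]
        simp only [dif_pos hBne, smul_eq_mul, mul_one]
        exact hf B hBS _ hgB _ hBne.some_mem
      · intro X hX hXB
        have hXS : X ∈ S := by simpa using hX
        have hgX : g ∉ X := fun hgX => hXB (hBuniq X ⟨hXS, hgX⟩)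
        show c X • (simpleQty (Set.toFinite X).toFinset).coeff g = 0
        rw [simpleQty_finite_apply, if_neg hgX, smul_zero]
    rw [key]
    refine Submodule.sum_mem _ ?_
    intro X hX
    refine Submodule.smul_mem _ _ (Submodule.subset_span ?_)
    exact ⟨X, by simpa using hX, Set.toFinite X, rfl⟩

lemma simpleQty_mem_of_isSUnion [Mul G] [Fintype G] {S : Set (Set G)} (hS : IsPartition S)
    {A : Set G} (hA : IsSUnion S A) (hAfin : A.Finite) :
    simpleQty hAfin.toFinset ∈ schurSpan S := by
  rw [mem_schurSpan_iff hS]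
  intro X hX x hx y hy
  rw [simpleQty_finite_apply, simpleQty_finite_apply]
  rcases hA X hX with h | h
  · rw [if_pos (h hx), if_pos (h hy)]
  · have hx' : x ∉ A := fun hxA => (Set.eq_empty_iff_forall_notMem.1 h x) ⟨hx, hxA⟩
    have hy' : y ∉ A := fun hyA => (Set.eq_empty_iff_forall_notMem.1 h y) ⟨hy, hyA⟩
    rw [if_neg hx', if_neg hy']

lemma schurSpan_mul_mem [Semigroup G] {S : Set (Set G)} (hS : IsSchurRing S)
    {a b : MonoidAlgebra ℚ G} (ha : a ∈ schurSpan S) (hb : b ∈ schurSpan S) :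
    a * b ∈ schurSpan S := by
  induction ha, hb using Submodule.span_induction₂ with
  | mem_mem x y hx hy =>
    obtain ⟨X, hX, hXfin, rfl⟩ := hx
    obtain ⟨Y, hY, hYfin, rfl⟩ := hy
    exact hS.2 X hX Y hY hXfin hYfin
  | zero_left y hy => rw [zero_mul]; exact Submodule.zero_mem _
  | zero_right x hx => rw [mul_zero]; exact Submodule.zero_mem _
  | add_left x y z hx hy hz ih₁ ih₂ => rw [add_mul]; exact Submodule.add_mem _ ih₁ ih₂
  | add_right x y z hx hy hz ih₁ ih₂ => rw [mul_add]; exact Submodule.add_mem _ ih₁ ih₂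
  | smul_left r x y hx hy ih => rw [smul_mul_assoc]; exact Submodule.smul_mem _ _ ih
  | smul_right r x y hx hy ih => rw [mul_smul_comm]; exact Submodule.smul_mem _ _ ih

lemma block_mem_schurSpan [Mul G] {S : Set (Set G)} {X : Set G} (hX : X ∈ S)
    (hXfin : X.Finite) : simpleQty hXfin.toFinset ∈ schurSpan S :=
  Submodule.subset_span ⟨X, hX, hXfin, rfl⟩

lemma refines_of_span_le [Mul G] [Fintype G] {U V : Set (Set G)} (hU : IsPartition U)
    (hV : IsPartition V) (h : schurSpan U ≤ schurSpan V) :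
    ∀ X ∈ V, ∃ Y ∈ U, X ⊆ Y := by
  intro X hX
  obtain ⟨x, hx⟩ := (hV.1 X hX).1
  obtain ⟨Y, ⟨hYU, hxY⟩, -⟩ := hU.2 x
  refine ⟨Y, hYU, ?_⟩
  intro y hy
  have hmem : simpleQty (Set.toFinite Y).toFinset ∈ schurSpan V :=
    h (block_mem_schurSpan hYU _)
  have heq := (mem_schurSpan_iff hV _).1 hmem X hX x hx y hy
  rw [simpleQty_finite_apply, simpleQty_finite_apply, if_pos hxY] at heq
  by_contra hyY
  rw [if_neg hyY] at heq
  norm_num at heq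

/-- The singleton partition is a Schur ring. -/
lemma singletons_isSchurRing [Semigroup G] :
    IsSchurRing (Set.range (fun x : G => ({x} : Set G))) := by
  constructor
  · constructor
    · rintro X ⟨x, rfl⟩
      exact ⟨Set.singleton_nonempty x, Set.finite_singleton x⟩
    · intro x
      refine ⟨{x}, ⟨⟨x, rfl⟩, rfl⟩, ?_⟩
      rintro Y ⟨⟨y, rfl⟩, hxy⟩
      simp_all
  · rintro X ⟨x, rfl⟩ Y ⟨y, rfl⟩ hX hY
    have hsq : ∀ (z : G) (h : ({z} : Set G).Finite),
        simpleQty h.toFinset = MonoidAlgebra.single z (1 : ℚ) := by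
      intro z h
      have : h.toFinset = {z} := by ext w; simp
      rw [this]
      simp [simpleQty]
    rw [hsq x hX, hsq y hY, MonoidAlgebra.single_mul_single, one_mul]
    refine Submodule.subset_span ⟨{x * y}, ⟨x * y, rfl⟩, Set.finite_singleton _, ?_⟩
    rw [hsq (x * y) (Set.finite_singleton _)]

/-- The meet construction: the join of two Schur partitions is a Schur ring whose
span is the intersection of the spans. -/
lemma exists_schur_meet [Semigroup G] [Fintype G] {S T : Set (Set G)}
    (hS : IsSchurRing S) (hT : IsSchurRing T) :
    ∃ U : Set (Set G), IsSchurRing U ∧ schurSpan U = schurSpan S ⊓ schurSpan T := by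
  classical
  set R : G → G → Prop := fun x y =>
    (∃ X ∈ S, x ∈ X ∧ y ∈ X) ∨ (∃ X ∈ T, x ∈ X ∧ y ∈ X) with hR
  set E := Relation.EqvGen R with hE
  set U : Set (Set G) := Set.range (fun x => {y | E x y}) with hUdef
  have hclass : ∀ x y, E x y → {z | E x z} = {z | E y z} := by
    intro x y hxy
    ext z
    exact ⟨fun h => (hxy.symm _ _).trans _ _ _ h, fun h => hxy.trans _ _ _ h⟩
  have hUpart : IsPartition U := by
    constructor
    · rintro X ⟨x, rfl⟩
      exact ⟨⟨x, Relation.EqvGen.refl x⟩, Set.toFinite _⟩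
    · intro x
      refine ⟨{y | E x y}, ⟨⟨x, rfl⟩, Relation.EqvGen.refl x⟩, ?_⟩
      rintro Y ⟨⟨w, rfl⟩, hxw⟩
      exact hclass w x hxw
  -- every block of U is an S-union and a T-union
  have hSU : ∀ C ∈ U, IsSUnion S C := by
    rintro C ⟨w, rfl⟩ X hX
    by_cases h : (X ∩ {y | E w y}).Nonempty
    · obtain ⟨x, hxX, hxC⟩ := h
      left
      intro y hy
      have hxy : E x y := Relation.EqvGen.rel x y (Or.inl ⟨X, hX, hxX, hy⟩)
      exact hxC.trans _ _ _ hxy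
    · right; exact Set.not_nonempty_iff_eq_empty.1 h
  have hTU : ∀ C ∈ U, IsSUnion T C := by
    rintro C ⟨w, rfl⟩ X hX
    by_cases h : (X ∩ {y | E w y}).Nonempty
    · obtain ⟨x, hxX, hxC⟩ := h
      left
      intro y hy
      have hxy : E x y := Relation.EqvGen.rel x y (Or.inr ⟨X, hX, hxX, hy⟩)
      exact hxC.trans _ _ _ hxy
    · right; exact Set.not_nonempty_iff_eq_empty.1 h
  have hspan : schurSpan U = schurSpan S ⊓ schurSpan T := by
    apply le_antisymm
    · rw [schurSpan, Submodule.span_le]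
      rintro z ⟨C, hC, hCfin, rfl⟩
      have h1 : simpleQty hCfin.toFinset ∈ schurSpan S :=
        simpleQty_mem_of_isSUnion hS.1 (hSU C hC) hCfin
      have h2 : simpleQty hCfin.toFinset ∈ schurSpan T :=
        simpleQty_mem_of_isSUnion hT.1 (hTU C hC) hCfin
      exact Submodule.mem_inf.2 ⟨h1, h2⟩
    · intro f hf
      rw [Submodule.mem_inf] at hf
      obtain ⟨hfS, hfT⟩ := hf
      rw [mem_schurSpan_iff hS.1] at hfS
      rw [mem_schurSpan_iff hT.1] at hfT
      rw [mem_schurSpan_iff hUpart]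
      rintro C ⟨w, rfl⟩ x hx y hy
      have hExy : E x y := (hx.symm _ _).trans _ _ _ hy
      clear hx hy
      induction hExy with
      | rel a b hab =>
        rcases hab with ⟨X, hX, haX, hbX⟩ | ⟨X, hX, haX, hbX⟩
        · exact hfS X hX a haX b hbX
        · exact hfT X hX a haX b hbX
      | refl a => rfl
      | symm a b _ ih => exact ih.symm
      | trans a b c _ _ ih₁ ih₂ => exact ih₁.trans ih₂
  refine ⟨U, ⟨hUpart, ?_⟩, hspan⟩
  intro X hX Y hY hXfin hYfin
  rw [hspan]
  have haS : simpleQty hXfin.toFinset ∈ schurSpan S :=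
    simpleQty_mem_of_isSUnion hS.1 (hSU X hX) hXfin
  have haT : simpleQty hXfin.toFinset ∈ schurSpan T :=
    simpleQty_mem_of_isSUnion hT.1 (hTU X hX) hXfin
  have hbS : simpleQty hYfin.toFinset ∈ schurSpan S :=
    simpleQty_mem_of_isSUnion hS.1 (hSU Y hY) hYfin
  have hbT : simpleQty hYfin.toFinset ∈ schurSpan T :=
    simpleQty_mem_of_isSUnion hT.1 (hTU Y hY) hYfin
  exact Submodule.mem_inf.2 ⟨schurSpan_mul_mem hS haS hbS, schurSpan_mul_mem hT haT hbT⟩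

end Aux

/-- for a finite semigroup, the intersection of (the spans of) two Schur
rings is again (the span of) a Schur ring, and there is a unique coarsest Schur ring. -/
theorem schur_meet_and_coarsest {G : Type*} [Semigroup G] [Fintype G]
    (S T : Set (Set G)) (hS : IsSchurRing S) (hT : IsSchurRing T) :
    (∃ U : Set (Set G), IsSchurRing U ∧ schurSpan U = schurSpan S ⊓ schurSpan T) ∧
    (∃! U₀ : Set (Set G), IsSchurRing U₀ ∧
      ∀ V : Set (Set G), IsSchurRing V → ∀ X ∈ V, ∃ Y ∈ U₀, X ⊆ Y) := by
  classical
  refine ⟨exists_schur_meet hS hT, ?_⟩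
  -- existence of a coarsest Schur ring: take one of minimal span
  have hfin : ({W : Set (Set G) | IsSchurRing W}).Finite := Set.toFinite _
  have hne : ({W : Set (Set G) | IsSchurRing W}).Nonempty :=
    ⟨_, singletons_isSchurRing⟩
  obtain ⟨U₀, hU₀, hmin'⟩ :=
    hfin.exists_minimalFor schurSpan _ hne
  have hmin : ∀ W : Set (Set G), IsSchurRing W → schurSpan W ≤ schurSpan U₀ →
      schurSpan U₀ = schurSpan W := fun W hW hle => le_antisymm (hmin' hW hle) hle
  have hU₀S : IsSchurRing U₀ := hU₀
  have hcoarse : ∀ V : Set (Set G), IsSchurRing V → ∀ X ∈ V, ∃ Y ∈ U₀, X ⊆ Y := by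
    intro V hV
    obtain ⟨W, hW, hWspan⟩ := exists_schur_meet hU₀S hV
    have hle : schurSpan W ≤ schurSpan U₀ := hWspan.le.trans inf_le_left
    have : schurSpan U₀ = schurSpan W := hmin W hW hle
    have hle2 : schurSpan U₀ ≤ schurSpan V := this.le.trans (hWspan.le.trans inf_le_right)
    exact refines_of_span_le hU₀S.1 hV.1 hle2
  refine ⟨U₀, ⟨hU₀S, hcoarse⟩, ?_⟩
  -- uniqueness
  rintro U₁ ⟨hU₁S, hcoarse₁⟩
  have hsub : ∀ {A B : Set (Set G)}, IsSchurRing A → IsSchurRing B →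
      (∀ V : Set (Set G), IsSchurRing V → ∀ X ∈ V, ∃ Y ∈ A, X ⊆ Y) →
      (∀ V : Set (Set G), IsSchurRing V → ∀ X ∈ V, ∃ Y ∈ B, X ⊆ Y) →
      A ⊆ B := by
    intro A B hA hB hcA hcB C hC
    obtain ⟨Y, hY, hCY⟩ := hcB A hA C hC
    obtain ⟨Z, hZ, hYZ⟩ := hcA B hB Y hY
    obtain ⟨x, hx⟩ := (hA.1.1 C hC).1
    have hCZ : C = Z := (hA.1.2 x).unique ⟨hC, hx⟩ ⟨hZ, hYZ (hCY hx)⟩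
    have : Y = C := Set.Subset.antisymm (hCZ ▸ hYZ) hCY
    exact this ▸ hY
  exact Set.Subset.antisymm (hsub hU₁S hU₀S hcoarse₁ hcoarse) (hsub hU₀S hU₁S hcoarse hcoarse₁)
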